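/- arXiv:2402.07212 — 2 statements merged into one kernel-verified Lean document; each statement's English description precedes it below -/
import Mathlib

section
/- There is a universal constant c > 0 such that for every integer d ≥ 1, every conductance C on Z^d, every u : Z^d → ℝ, every finitely supported η : Z^d → ℝ, every R > 0 and every k > 0, writing u_{−k,+}(x) = (u(x) − k)_+, one has: Σ_{x,y∈B_R} (u(x) − u(y)) (u_{−k,+}(x)η²(x) − u_{−k,+}(y)η²(y)) C_{x,y} ≥ Σ_{x,y∈B_R} (u_{−k,+}(x) − u_{−k,+}(y)) (u_{−k,+}(x)η²(x) − u_{−k,+}(y)η²(y)) C_{x,y} ≥ (1/2) Σ_{x,y∈B_R} (u_{−k,+}(x) − u_{−k,+}(y))² max{η²(x), η²(y)} C_{x,y} − c Σ_{x,y∈B_R} max{u_{−k,+}²(x), u_{−k,+}²(y)} (η(x) − η(y))² C_{x,y}. -/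
open scoped BigOperators ENNReal Classical
open MeasureTheory

noncomputable section

abbrev Zd (d : ℕ) := Fin d → ℤ

/-- Euclidean norm of a lattice point. -/
def znorm {d : ℕ} (x : Zd d) : ℝ := Real.sqrt (∑ i, ((x i : ℝ)) ^ 2)

/-- The ball `B_R = {z : |z| ≤ R}` as a finite set. -/
def zball (d : ℕ) (R : ℝ) : Finset (Zd d) :=
  (Finset.Icc (fun _ => (-⌈R⌉ : ℤ)) fun _ => (⌈R⌉ : ℤ)).filter fun z => znorm z ≤ R

/-- A conductance: symmetric, nonnegative, vanishing on the diagonal. -/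
def IsConductance {d : ℕ} (C : Zd d → Zd d → ℝ) : Prop :=
  (∀ x y, 0 ≤ C x y) ∧ (∀ x y, C x y = C y x) ∧ ∀ x, C x x = 0

def muC {d : ℕ} (C : Zd d → Zd d → ℝ) (x : Zd d) : ℝ :=
  ∑' z : Zd d, znorm z ^ 2 * C x (x + z)

def muM {d : ℕ} (C : Zd d → Zd d → ℝ) (m : ℝ) (x : Zd d) : ℝ :=
  ∑' z : Zd d, znorm z ^ m * C x (x + z)

def nuC {d : ℕ} (C : Zd d → Zd d → ℝ) (x : Zd d) : ℝ :=
  ∑ z ∈ (zball d 1).filter (fun z => znorm z = 1), (C x (x + z))⁻¹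

/-- normalized ℓ^p norm over a finite set, `p` finite. -/
def pnorm {d : ℕ} (p : ℝ) (A : Finset (Zd d)) (f : Zd d → ℝ) : ℝ :=
  ((A.card : ℝ)⁻¹ * ∑ x ∈ A, |f x| ^ p) ^ (1 / p)

/-- normalized ℓ^p norm over a finite set, allowing `p = ∞`. -/
def pnormE {d : ℕ} (p : ℝ≥0∞) (A : Finset (Zd d)) (f : Zd d → ℝ) : ℝ :=
  if p = ∞ then sSup ((fun x => |f x|) '' (A : Set (Zd d))) else pnorm p.toReal A f

/-- real value of `1/p` for `p ∈ (1,∞]` (gives `0` at `p = ∞`). -/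
def rinv (p : ℝ≥0∞) : ℝ := p⁻¹.toReal

/-- conjugate exponent `p_* = p/(p-1)`, with `p_* = 1` when `p = ∞`. -/
def pconj (p : ℝ≥0∞) : ℝ := if p = ∞ then 1 else p.toReal / (p.toReal - 1)

/-- tail of `v` at scale `R`. -/
def tailT {d : ℕ} (C : Zd d → Zd d → ℝ) (v : Zd d → ℝ) (R : ℝ) (x : Zd d) : ℝ :=
  R ^ 2 * ∑' y : Zd d, if R < znorm y then v y * C x y else 0

/-- caloric on `[a,b] × B_R`: `∂ₜ u = ℒu`, all sums converging (absolutely). -/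
def Caloric {d : ℕ} (C : Zd d → Zd d → ℝ) (u : ℝ → Zd d → ℝ) (a b R : ℝ) : Prop :=
  ∀ t ∈ Set.Icc a b, ∀ x ∈ zball d R,
    Summable (fun y : Zd d => (u t y - u t x) * C x y) ∧
    HasDerivAt (fun s => u s x) (∑' y : Zd d, (u t y - u t x) * C x y) t

/-- space-time norm `‖u‖_{p,p'}` over `[a,b] × B_r`. -/
def stnorm {d : ℕ} (p p' : ℝ) (a b r : ℝ) (u : ℝ → Zd d → ℝ) : ℝ :=
  ((b - a)⁻¹ * ∫ t in a..b, (pnorm p (zball d r) (u t)) ^ p') ^ (1 / p')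

/-- product of Lebesgue and counting measure on `ℝ × Zd d`. -/
def pcm (d : ℕ) : Measure (ℝ × Zd d) := (volume : Measure ℝ).prod Measure.count

/-!
Both inequalities hold term by term, so it suffices to prove them for each pair `(x, y)` and
multiply by `C x y ≥ 0`. The first holds because `u - (u - k)₊ = min u k` is nondecreasing, and
`(u x - k)₊ η x ² - (u y - k)₊ η y ²` has the sign of `u x - u y` wherever this minimum differs.
For the second, with `a, b` the truncations and `η y ² ≤ η x ²`, write
`(a - b)(a s² - b t²) = (a - b)² s² + b (a - b)(s - t)(s + t)` and absorb the cross term by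
Young's inequality, using `(s + t)² ≤ 4 s²`; this gives `c = 2`.
-/

theorem sub_mul_truncation_ge (k x y s t : ℝ) :
    (x - y) * (max (x - k) 0 * s ^ 2 - max (y - k) 0 * t ^ 2) ≥
      (max (x - k) 0 - max (y - k) 0) * (max (x - k) 0 * s ^ 2 - max (y - k) 0 * t ^ 2) := by
  rcases le_total (x - k) 0 with hx | hx <;> rcases le_total (y - k) 0 with hy | hy <;>
    simp only [max_eq_left, max_eq_right, hx, hy]
  · nlinarith
  · nlinarith [mul_nonneg (mul_nonneg (neg_nonneg.2 hx) hy) (sq_nonneg t)]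
  · nlinarith [mul_nonneg (mul_nonneg (neg_nonneg.2 hy) hx) (sq_nonneg s)]
  · nlinarith

theorem sub_mul_sub_mul_sq_ge_of_sq_le {a b s t : ℝ} (hts : t ^ 2 ≤ s ^ 2) :
    (a - b) * (a * s ^ 2 - b * t ^ 2) ≥ (1 / 2) * (a - b) ^ 2 * s ^ 2 - 2 * b ^ 2 * (s - t) ^ 2 := by
  have hsum : (s + t) ^ 2 ≤ 4 * s ^ 2 := by nlinarith [sq_nonneg (s - t)]
  have young : 0 ≤ ((a - b) * (s + t) + 4 * b * (s - t)) ^ 2 := sq_nonneg _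
  nlinarith [mul_le_mul_of_nonneg_left hsum (sq_nonneg (a - b))]

theorem sub_mul_sub_mul_sq_ge (a b s t : ℝ) :
    (a - b) * (a * s ^ 2 - b * t ^ 2) ≥
      (1 / 2) * (a - b) ^ 2 * max (s ^ 2) (t ^ 2) - 2 * max (a ^ 2) (b ^ 2) * (s - t) ^ 2 := by
  rcases le_total (t ^ 2) (s ^ 2) with hts | hst
  · have := sub_mul_sub_mul_sq_ge_of_sq_le (a := a) (b := b) hts
    rw [max_eq_left hts]
    nlinarith [le_max_right (a ^ 2) (b ^ 2), sq_nonneg (s - t)]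
  · have := sub_mul_sub_mul_sq_ge_of_sq_le (a := b) (b := a) hst
    rw [max_eq_right hst]
    nlinarith [le_max_left (a ^ 2) (b ^ 2), sq_nonneg (s - t)]

theorem Finset.sum_sum_mul_le_sum_sum_mul {α : Type*} (A : Finset α) {f g w : α → α → ℝ}
    (hw : ∀ x y, 0 ≤ w x y) (hfg : ∀ x y, f x y ≤ g x y) :
    ∑ x ∈ A, ∑ y ∈ A, f x y * w x y ≤ ∑ x ∈ A, ∑ y ∈ A, g x y * w x y :=
  Finset.sum_le_sum fun x _ => Finset.sum_le_sum fun y _ =>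
    mul_le_mul_of_nonneg_right (hfg x y) (hw x y)

/-- Lemma 2.4 (after [DKP]). -/
theorem statement1 :
    ∃ c : ℝ, 0 < c ∧
      ∀ (d : ℕ), 1 ≤ d → ∀ C : Zd d → Zd d → ℝ, IsConductance C →
        ∀ u η : Zd d → ℝ, (Function.support η).Finite →
          ∀ R : ℝ, 0 < R → ∀ k : ℝ, 0 < k →
            (∑ x ∈ zball d R, ∑ y ∈ zball d R,
                (u x - u y) * (max (u x - k) 0 * η x ^ 2 - max (u y - k) 0 * η y ^ 2) * C x y ≥
              ∑ x ∈ zball d R, ∑ y ∈ zball d R,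
                (max (u x - k) 0 - max (u y - k) 0) *
                  (max (u x - k) 0 * η x ^ 2 - max (u y - k) 0 * η y ^ 2) * C x y) ∧
            (∑ x ∈ zball d R, ∑ y ∈ zball d R,
                (max (u x - k) 0 - max (u y - k) 0) *
                  (max (u x - k) 0 * η x ^ 2 - max (u y - k) 0 * η y ^ 2) * C x y ≥
              (1 / 2) * ∑ x ∈ zball d R, ∑ y ∈ zball d R,
                    (max (u x - k) 0 - max (u y - k) 0) ^ 2 * max (η x ^ 2) (η y ^ 2) * C x y -
                c * ∑ x ∈ zball d R, ∑ y ∈ zball d R,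
                      max ((max (u x - k) 0) ^ 2) ((max (u y - k) 0) ^ 2) * (η x - η y) ^ 2 *
                        C x y) := by
  refine ⟨2, two_pos, fun d _ C hC u η _ R _ k _ => ?_⟩
  have hC0 : ∀ x y, 0 ≤ C x y := hC.1
  refine ⟨Finset.sum_sum_mul_le_sum_sum_mul _ hC0 fun x y => ?_, ?_⟩
  · exact sub_mul_truncation_ge k (u x) (u y) (η x) (η y)
  · have hpair := Finset.sum_sum_mul_le_sum_sum_mul (zball d R) hC0 fun x y =>
      sub_mul_sub_mul_sq_ge (max (u x - k) 0) (max (u y - k) 0) (η x) (η y)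
    simp only [sub_mul, Finset.sum_sub_distrib, Finset.mul_sum, mul_assoc] at hpair ⊢
    exact hpair

end
end

section
/- Let d ≥ 1 and let C be a conductance on Z^d with μ(x) = Σ_{z∈Z^d} |z|² C_{x,x+z} < ∞ for every x. There is a universal constant c > 0 such that the following holds. Let R > 0, let η : Z^d → [0,1] be supported in B_R, let f : Z^d → ℝ satisfy ‖∇f‖_∞ := sup_{x≠y} |f(x) − f(y)|/|x − y| < ∞, and let u : Z^d → ℝ be such that all the sums below converge absolutely and ℒu(x) = ℒf(x) for every x ∈ B_R. Then for every k > 0, writing u_{−k,+}(x) = (u(x) − k)_+: Σ_{x,y∈B_R} (u_{−k,+}(x) − u_{−k,+}(y))² max{η²(x), η²(y)} C_{x,y} ≤ c‖∇η‖_∞² Σ_{x∈B_R} u_{−k,+}²(x) μ(x) + c‖∇f‖_∞² Σ_{x∈B_R} 1_{{u(x)>k}} μ(x) + c‖∇f‖_∞‖∇η‖_∞ Σ_{x∈B_R} u_{−k,+}(x) μ(x) + c Σ_{x∈B_R} u_{−k,+}(x) η²(x) ( Σ_{y∉B_R} (u_{−k,+}(y) + ‖∇f‖_∞ |x − y|)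 C_{x,y} ), where ‖∇η‖_∞ := sup_{x≠y} |η(x) − η(y)|/|x − y|. -/
open scoped BigOperators ENNReal Classical
open MeasureTheory

noncomputable section

lemma znorm_nonneg {d : ℕ} (x : Zd d) : 0 ≤ znorm x := Real.sqrt_nonneg _

lemma znorm_neg {d : ℕ} (x : Zd d) : znorm (-x) = znorm x := by
  unfold znorm; congr 1; apply Finset.sum_congr rfl; intro i _
  push_cast [Pi.neg_apply]; ring

lemma znorm_sub_comm {d : ℕ} (x y : Zd d) : znorm (x - y) = znorm (y - x) := by
  rw [← znorm_neg (x - y), neg_sub]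

lemma one_le_znorm {d : ℕ} {x : Zd d} (h : x ≠ 0) : 1 ≤ znorm x := by
  obtain ⟨i, hi⟩ := Function.ne_iff.mp h
  have h1 : (1:ℝ) ≤ ((x i : ℝ))^2 := by
    have : (1:ℤ) ≤ |x i| := Int.one_le_abs (by simpa using hi)
    have : (1:ℝ) ≤ |(x i : ℝ)| := by exact_mod_cast (by simpa using this)
    nlinarith [sq_abs ((x i:ℝ)), abs_nonneg ((x i : ℝ))]
  have h2 : (1:ℝ) ≤ ∑ j, ((x j : ℝ))^2 := by
    refine le_trans h1 (Finset.single_le_sum (f := fun j => ((x j:ℝ))^2) (fun j _ => sq_nonneg _) (Finset.mem_univ i))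
  calc (1:ℝ) = Real.sqrt 1 := by simp
  _ ≤ znorm x := Real.sqrt_le_sqrt h2

lemma summable_tail {α : Type*} [DecidableEq α] (B : Finset α) (g : α → ℝ) (hg : Summable g) :
    Summable (fun y => if y ∈ B then 0 else g y) := by
  have hfin : Summable (fun y => if y ∈ B then g y else 0) :=
    summable_of_ne_finset_zero (s := B) (fun b hb => by simp [hb])
  have := hg.sub hfin
  exact this.congr fun y => by by_cases h : y ∈ B <;> simp [h]

lemma tsum_split {α : Type*} [DecidableEq α] (B : Finset α) (g : α → ℝ) (hg : Summable g) :
    ∑' y, g y = (∑ y ∈ B, g y) + ∑' y, (if y ∈ B then 0 else g y) := by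
  have hfin : Summable (fun y => if y ∈ B then g y else 0) :=
    summable_of_ne_finset_zero (s := B) (fun b hb => by simp [hb])
  have h2 : Summable (fun y => if y ∈ B then 0 else g y) := summable_tail B g hg
  calc ∑' y, g y = ∑' y, ((if y ∈ B then g y else 0) + (if y ∈ B then 0 else g y)) := by
        congr 1; funext y; by_cases h : y ∈ B <;> simp [h]
  _ = (∑' y, (if y ∈ B then g y else 0)) + ∑' y, (if y ∈ B then 0 else g y) := Summable.tsum_add hfin h2
  _ = _ := by
        rw [tsum_eq_sum (s := B) (fun b hb => by simp [hb])]
        congr 1; exact Finset.sum_congr rfl (fun b hb => by simp [hb])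
lemma alg1 (ux uy k p2 q2 : ℝ) (hp2 : 0 ≤ p2) (hq2 : 0 ≤ q2) :
    (max (uy - k) 0 - max (ux - k) 0) * (q2 * max (uy-k) 0 - p2 * max (ux-k) 0)
      ≤ (uy - ux) * (q2 * max (uy-k) 0 - p2 * max (ux-k) 0) := by
  rcases le_total (ux - k) 0 with h1 | h1 <;> rcases le_total (uy - k) 0 with h2 | h2 <;>
    simp [max_eq_left, max_eq_right, h1, h2]
  · nlinarith [mul_nonneg (neg_nonneg.2 h1) (mul_nonneg hq2 h2)]
  · nlinarith [mul_nonneg (neg_nonneg.2 h2) (mul_nonneg hp2 h1)]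

lemma alg2 (s t p q : ℝ) (hs : 0 ≤ s) (ht : 0 ≤ t) (hp : 0 ≤ p) (hq : 0 ≤ q) :
    (1/2) * max (p^2) (q^2) * (s - t)^2 - 2*(t^2+s^2)*(q-p)^2
      ≤ (s - t) * (q^2 * s - p^2 * t) := by
  rcases le_total p q with h | h
  · rw [max_eq_right (by nlinarith : p^2 ≤ q^2)]
    nlinarith [sq_nonneg (q*(s-t)+2*t*(q-p)), sq_nonneg (q*(s-t)-2*t*(q-p)),
      mul_nonneg ht (sub_nonneg.2 h), sq_nonneg (q-p), sq_nonneg (s-t),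
      mul_nonneg (sq_nonneg (q-p)) (by nlinarith [sq_nonneg (s - t/2)] : (0:ℝ) ≤ 2*s^2 - t*s + t^2)]
  · rw [max_eq_left (by nlinarith : q^2 ≤ p^2)]
    nlinarith [sq_nonneg (p*(s-t)+2*s*(q-p)), sq_nonneg (p*(s-t)-2*s*(q-p)),
      mul_nonneg hs (sub_nonneg.2 h), sq_nonneg (q-p), sq_nonneg (s-t),
      mul_nonneg (sq_nonneg (q-p)) (by nlinarith [sq_nonneg (t - s/2)] : (0:ℝ) ≤ 2*t^2 - t*s + s^2)]

lemma alg3 (s t p q : ℝ) (hs : 0 ≤ s) (ht : 0 ≤ t) (hp : 0 ≤ p) (hp1 : p ≤ 1)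
    (hq : 0 ≤ q) (hq1 : q ≤ 1) :
    |q^2*s - p^2*t| ≤ max (p^2) (q^2) * |s-t| + (t+s)*(2*|q-p|) := by
  have h1 : q^2*s - p^2*t = q^2*(s-t) + t*((q+p)*(q-p)) := by ring
  calc |q^2*s - p^2*t| ≤ |q^2*(s-t)| + |t*((q+p)*(q-p))| := by rw [h1]; exact abs_add_le _ _
  _ = q^2*|s-t| + t*((q+p)*|q-p|) := by
      rw [abs_mul, abs_mul, abs_mul, abs_of_nonneg (sq_nonneg q : (0:ℝ) ≤ q^2),
        abs_of_nonneg ht, abs_of_nonneg (by linarith : (0:ℝ) ≤ q+p)]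
  _ ≤ max (p^2) (q^2) * |s-t| + (t+s)*(2*|q-p|) := by
      have h2 : q^2 ≤ max (p^2) (q^2) := le_max_right _ _
      have h3 : t*((q+p)*|q-p|) ≤ (t+s)*(2*|q-p|) := by
        have : (q+p)*|q-p| ≤ 2*|q-p| := by nlinarith [abs_nonneg (q-p)]
        nlinarith [abs_nonneg (q-p), mul_nonneg hs (abs_nonneg (q-p))]
      have := mul_le_mul_of_nonneg_right h2 (abs_nonneg (s-t))
      linarith

set_option maxHeartbeats 1000000 in
lemma pairbound (ux uy fx fy ex ey k Lf Lh n : ℝ)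
    (hx0 : 0 ≤ ex) (hx1 : ex ≤ 1) (hy0 : 0 ≤ ey) (hy1 : ey ≤ 1)
    (hLf : 0 ≤ Lf) (hLh : 0 ≤ Lh) (hn : 0 ≤ n)
    (hF : |fy - fx| ≤ Lf * n) (hE : |ey - ex| ≤ Lh * n) :
    -(((uy - ux) - (fy - fx)) * (ey^2 * max (uy-k) 0 - ex^2 * max (ux-k) 0)) ≤
      -((1/4) * max (ex^2) (ey^2) * (max (uy-k) 0 - max (ux-k) 0)^2)
      + 2*((max (ux-k) 0)^2 + (max (uy-k) 0)^2) * (Lh*n)^2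
      + Lf^2*n^2*((if k < ux then 1 else 0) + (if k < uy then 1 else 0))
      + 2*Lf*Lh*n^2*(max (ux-k) 0 + max (uy-k) 0) := by
  set t := max (ux-k) 0 with hts
  set s := max (uy-k) 0 with hss
  set M := max (ex^2) (ey^2) with hM
  set ι : ℝ := (if k < ux then 1 else 0) + (if k < uy then 1 else 0) with hiota
  clear_value t s M ι
  have ht : 0 ≤ t := hts ▸ le_max_right _ _
  have hs : 0 ≤ s := hss ▸ le_max_right _ _
  have hM0 : 0 ≤ M := hM ▸ le_trans (sq_nonneg ex) (le_max_left _ _)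
  have hM1 : M ≤ 1 := hM ▸ max_le (by nlinarith) (by nlinarith)
  have hι0 : 0 ≤ ι := by
    rw [hiota]; split <;> split <;> norm_num
  have hA : (1/2)*M*(s-t)^2 - 2*(t^2+s^2)*(ey-ex)^2 ≤ (uy-ux)*(ey^2*s - ex^2*t) := by
    rw [hts, hss, hM]
    exact le_trans (alg2 _ _ ex ey (le_max_right _ _) (le_max_right _ _) hx0 hy0)
      (alg1 ux uy k (ex^2) (ey^2) (sq_nonneg _) (sq_nonneg _))
  have hEn : (ey-ex)^2 ≤ (Lh*n)^2 := by
    have := abs_nonneg (ey - ex)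
    nlinarith [sq_abs (ey-ex)]
  have hB : (fy-fx)*(ey^2*s - ex^2*t) ≤ Lf*n*(M*|s-t|) + 2*Lf*Lh*n^2*(t+s) := by
    have h1 : (fy-fx)*(ey^2*s - ex^2*t) ≤ |fy-fx| * |ey^2*s - ex^2*t| := by
      rw [← abs_mul]; exact le_abs_self _
    have h2 : |ey^2*s - ex^2*t| ≤ M*|s-t| + (t+s)*(2*|ey-ex|) :=
      hM ▸ alg3 s t ex ey hs ht hx0 hx1 hy0 hy1
    have h3 : |fy-fx| * |ey^2*s - ex^2*t| ≤ (Lf*n) * (M*|s-t| + (t+s)*(2*|ey-ex|)) := by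
      apply mul_le_mul hF h2 (abs_nonneg _) (by positivity)
    have h4 : (t+s)*(2*|ey-ex|) ≤ (t+s)*(2*(Lh*n)) := by
      apply mul_le_mul_of_nonneg_left (by linarith) (by linarith)
    nlinarith [mul_nonneg hLf hn]
  have hC : Lf*n*(M*|s-t|) ≤ (1/4)*M*(s-t)^2 + Lf^2*n^2*ι := by
    by_cases hst : s = t
    · rw [hst, sub_self]
      simp only [abs_zero, mul_zero, ne_eq]
      have h0 : (0:ℝ) ≤ Lf^2*n^2*ι := mul_nonneg (by positivity) hι0
      have h1 : (1/4)*M*(0:ℝ)^2 + Lf^2*n^2*ι = Lf^2*n^2*ι := by ring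
      linarith
    · have hι1 : 1 ≤ ι := by
        rw [hiota]
        by_cases h1 : k < ux
        · simp [h1]; split <;> norm_num
        · by_cases h2 : k < uy
          · simp [h1, h2]
          · exfalso
            have : t = 0 := by rw [hts]; simp [max_eq_right]; linarith [not_lt.1 h1]
            have hs0 : s = 0 := by rw [hss]; simp [max_eq_right]; linarith [not_lt.1 h2]
            exact hst (by rw [hs0, this])
      have key : Lf*n*|s-t| ≤ (1/4)*(s-t)^2 + Lf^2*n^2 := by
        nlinarith [sq_nonneg (|s-t|/2 - Lf*n), sq_abs (s-t), abs_nonneg (s-t), mul_nonneg hLf hn]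
      have step : Lf*n*(M*|s-t|) ≤ M*((1/4)*(s-t)^2 + Lf^2*n^2) := by
        have := mul_le_mul_of_nonneg_left key hM0
        nlinarith
      have : M*((1/4)*(s-t)^2 + Lf^2*n^2) ≤ (1/4)*M*(s-t)^2 + Lf^2*n^2*ι := by
        have h5 : M*(Lf^2*n^2) ≤ 1*(Lf^2*n^2) := by
          apply mul_le_mul_of_nonneg_right hM1 (by positivity)
        have h6 : 1*(Lf^2*n^2) ≤ ι*(Lf^2*n^2) := by
          apply mul_le_mul_of_nonneg_right hι1 (by positivity)
        have h7 : M*((1/4)*(s-t)^2 + Lf^2*n^2) = (1/4)*M*(s-t)^2 + M*(Lf^2*n^2) := by ring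
        have h8 : Lf^2*n^2*ι = ι*(Lf^2*n^2) := by ring
        linarith
      linarith
  have hEn2 : 2*(t^2+s^2)*(ey-ex)^2 ≤ 2*(t^2+s^2)*(Lh*n)^2 :=
    mul_le_mul_of_nonneg_left hEn (by positivity)
  have expand : -(((uy - ux) - (fy - fx)) * (ey^2*s - ex^2*t))
      = -((uy-ux)*(ey^2*s - ex^2*t)) + (fy-fx)*(ey^2*s - ex^2*t) := by ring
  rw [expand]
  linarith


set_option maxHeartbeats 2000000 in
/-- Lemma 3.1: energy estimate for solutions of `ℒu = ℒf` on `B_R`. -/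
theorem statement4 :
    ∃ c : ℝ, 0 < c ∧
      ∀ (d : ℕ), 1 ≤ d → ∀ C : Zd d → Zd d → ℝ, IsConductance C →
        (∀ x, Summable fun z : Zd d => znorm z ^ 2 * C x (x + z)) →
        ∀ R : ℝ, 0 < R →
        ∀ η : Zd d → ℝ, (∀ x, 0 ≤ η x) → (∀ x, η x ≤ 1) → (∀ x ∉ zball d R, η x = 0) →
        ∀ f u : Zd d → ℝ,
        ∀ Lf : ℝ, 0 ≤ Lf → (∀ x y, |f x - f y| ≤ Lf * znorm (x - y)) →
        ∀ Lη : ℝ, 0 ≤ Lη → (∀ x y, |η x - η y| ≤ Lη * znorm (x - y)) →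
          (∀ x, Summable fun y : Zd d => (u y - u x) * C x y) →
          (∀ x, Summable fun y : Zd d => (f y - f x) * C x y) →
          (∀ x ∈ zball d R,
            (∑' y : Zd d, (u y - u x) * C x y) = ∑' y : Zd d, (f y - f x) * C x y) →
          ∀ k : ℝ, 0 < k →
            ∑ x ∈ zball d R, ∑ y ∈ zball d R,
                (max (u x - k) 0 - max (u y - k) 0) ^ 2 * max (η x ^ 2) (η y ^ 2) * C x y ≤
              c * Lη ^ 2 * ∑ x ∈ zball d R, (max (u x - k) 0) ^ 2 * muC C x +
                c * Lf ^ 2 * ∑ x ∈ zball d R, (if k < u x then muC C x else 0) +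
                c * Lf * Lη * ∑ x ∈ zball d R, max (u x - k) 0 * muC C x +
                c * ∑ x ∈ zball d R,
                    max (u x - k) 0 * η x ^ 2 *
                      ∑' y : Zd d,
                        if y ∈ zball d R then 0
                        else (max (u y - k) 0 + Lf * znorm (x - y)) * C x y := by
  refine ⟨16, by norm_num, ?_⟩
  intro d _hd C hC hmu R _hR η hη0 hη1 _hηs f u Lf hLf hLipf Lη hLη hLipη hu hf huf k _hk
  obtain ⟨hCpos, hCsym, hCdiag⟩ := hC
  set B := zball d R with hB
  -- basic summability facts
  have hmu2 : ∀ x : Zd d, Summable (fun y => znorm (x - y)^2 * C x y) := by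
    intro x
    refine (Equiv.addLeft x).summable_iff.mp ?_
    have he : ((fun y : Zd d => znorm (x - y)^2 * C x y) ∘ (Equiv.addLeft x))
        = fun z => znorm z ^2 * C x (x + z) := by
      funext z
      simp only [Function.comp_apply, Equiv.coe_addLeft]
      rw [show x - (x + z) = -z by abel, znorm_neg]
    rw [he]; exact hmu x
  have hmueq : ∀ x : Zd d, (∑' y, znorm (x - y)^2 * C x y) = muC C x := by
    intro x
    rw [← (Equiv.addLeft x).tsum_eq (fun y => znorm (x - y)^2 * C x y)]
    unfold muC
    congr 1; funext z
    simp only [Equiv.coe_addLeft]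
    rw [show x - (x + z) = -z by abel, znorm_neg]
  have hCz : ∀ x y : Zd d, C x y ≤ znorm (x - y)^2 * C x y := by
    intro x y
    by_cases h : y = x
    · subst h; simp [hCdiag]
    · have h1 : (1:ℝ) ≤ znorm (x - y) := one_le_znorm (sub_ne_zero.2 (Ne.symm h))
      have h2 : (1:ℝ) ≤ znorm (x - y)^2 := by nlinarith
      calc C x y = 1 * C x y := (one_mul _).symm
      _ ≤ znorm (x - y)^2 * C x y := mul_le_mul_of_nonneg_right h2 (hCpos x y)
  have hCsum : ∀ x : Zd d, Summable (fun y => C x y) := fun x =>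
    Summable.of_nonneg_of_le (hCpos x) (hCz x) (hmu2 x)
  have hnC : ∀ x : Zd d, Summable (fun y => znorm (x - y) * C x y) := by
    intro x
    refine Summable.of_nonneg_of_le (fun y => mul_nonneg (znorm_nonneg _) (hCpos x y)) ?_ (hmu2 x)
    intro y
    by_cases h : y = x
    · subst h; simp [hCdiag]
    · have h1 : (1:ℝ) ≤ znorm (x - y) := one_le_znorm (sub_ne_zero.2 (Ne.symm h))
      have h2 : znorm (x - y) ≤ znorm (x - y)^2 := by nlinarith
      exact mul_le_mul_of_nonneg_right h2 (hCpos x y)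
  have hvC : ∀ x : Zd d, Summable (fun y => max (u y - k) 0 * C x y) := by
    intro x
    refine Summable.of_nonneg_of_le (fun y => mul_nonneg (le_max_right _ _) (hCpos x y)) ?_
      (((hu x).abs).add ((hCsum x).mul_left |u x - k|))
    intro y
    have h1 : max (u y - k) 0 ≤ |u y - u x| + |u x - k| := by
      refine max_le ?_ (by positivity)
      calc u y - k ≤ |u y - k| := le_abs_self _
      _ = |(u y - u x) + (u x - k)| := by ring_nf
      _ ≤ |u y - u x| + |u x - k| := abs_add_le _ _
    calc max (u y - k) 0 * C x y ≤ (|u y - u x| + |u x - k|) * C x y :=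
          mul_le_mul_of_nonneg_right h1 (hCpos x y)
    _ = |(u y - u x) * C x y| + |u x - k| * C x y := by
          rw [abs_mul, abs_of_nonneg (hCpos x y)]; ring
  have htailsum : ∀ x : Zd d,
      Summable (fun y => if y ∈ B then 0 else (max (u y - k) 0 + Lf * znorm (x - y)) * C x y) := by
    intro x
    refine Summable.of_nonneg_of_le ?_ ?_ ((hvC x).add ((hnC x).mul_left Lf))
    · intro y; split
      · exact le_rfl
      · exact mul_nonneg (add_nonneg (le_max_right _ _)
          (mul_nonneg hLf (znorm_nonneg _))) (hCpos x y)
    · intro y; split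
      · exact add_nonneg (mul_nonneg (le_max_right _ _) (hCpos x y))
          (mul_nonneg hLf (mul_nonneg (znorm_nonneg _) (hCpos x y)))
      · have : (max (u y - k) 0 + Lf * znorm (x - y)) * C x y
            = max (u y - k) 0 * C x y + Lf * (znorm (x - y) * C x y) := by ring
        rw [this]
  -- the test function and the equation
  set g : Zd d → Zd d → ℝ := fun x y => ((u y - u x) - (f y - f x)) * C x y with hgd
  have hgsum : ∀ x, Summable (g x) := by
    intro x
    have h := (hu x).sub (hf x)
    exact h.congr fun y => by simp only [hgd]; ring
  have hzero : ∀ x ∈ B, (∑ y ∈ B, g x y) = -∑' y, (if y ∈ B then 0 else g x y) := by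
    intro x hx
    have h0 : ∑' y, g x y = 0 := by
      have h1 : ∑' y, g x y = (∑' y, (u y - u x) * C x y) - ∑' y, (f y - f x) * C x y := by
        rw [← Summable.tsum_sub (hu x) (hf x)]
        congr 1; funext y; simp only [hgd]; ring
      rw [h1, huf x hx, sub_self]
    have h2 := tsum_split B (g x) (hgsum x)
    rw [h0] at h2
    linarith
  -- tail bound
  have htailbd : ∀ x ∈ B, η x ^ 2 * max (u x - k) 0 * (∑' y, (if y ∈ B then 0 else g x y))
      ≤ η x ^ 2 * max (u x - k) 0 *
        (∑' y, if y ∈ B then 0 else (max (u y - k) 0 + Lf * znorm (x - y)) * C x y) := by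
    intro x _hx
    rcases le_or_gt (u x) k with hux | hux
    · have h0 : max (u x - k) 0 = 0 := max_eq_right (by linarith)
      simp [h0]
    · refine mul_le_mul_of_nonneg_left ?_ (mul_nonneg (sq_nonneg _) (le_max_right _ _))
      refine Summable.tsum_le_tsum ?_ (summable_tail B (g x) (hgsum x)) (htailsum x)
      intro y
      by_cases hy : y ∈ B
      · simp [hy]
      · simp only [hy, if_false, hgd]
        refine mul_le_mul_of_nonneg_right ?_ (hCpos x y)
        have h1 : u y - u x ≤ max (u y - k) 0 := le_trans (by linarith) (le_max_left _ _)
        have h2 : f x - f y ≤ Lf * znorm (x - y) := le_trans (le_abs_self _) (hLipf x y)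
        linarith
  -- the weight ψ
  set ψ : Zd d → ℝ := fun x => 2*Lη^2*(max (u x - k) 0)^2
      + Lf^2*(if k < u x then 1 else 0) + 2*Lf*Lη*(max (u x - k) 0) with hψd
  have hψ0 : ∀ x, 0 ≤ ψ x := by
    intro x
    simp only [hψd]
    have h1 : (0:ℝ) ≤ (if k < u x then (1:ℝ) else 0) := by split <;> norm_num
    have h2 : (0:ℝ) ≤ max (u x - k) 0 := le_max_right _ _
    nlinarith [mul_nonneg (mul_nonneg hLf hLη) h2, mul_nonneg (sq_nonneg Lf) h1,
      mul_nonneg (sq_nonneg Lη) (sq_nonneg (max (u x - k) 0))]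
  -- pointwise symmetric bound
  have key1 : ∀ x y : Zd d,
      η x^2 * max (u x - k) 0 * g x y + η y^2 * max (u y - k) 0 * g y x ≤
        (-(1/4)) * ((max (u x - k) 0 - max (u y - k) 0)^2 * max (η x ^ 2) (η y ^ 2) * C x y)
        + (ψ x + ψ y) * (znorm (x - y)^2 * C x y) := by
    intro x y
    have hF : |f y - f x| ≤ Lf * znorm (x - y) := by rw [abs_sub_comm]; exact hLipf x y
    have hE : |η y - η x| ≤ Lη * znorm (x - y) := by rw [abs_sub_comm]; exact hLipη x y
    have hpb := pairbound (u x) (u y) (f x) (f y) (η x) (η y) k Lf Lη (znorm (x - y))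
      (hη0 x) (hη1 x) (hη0 y) (hη1 y) hLf hLη (znorm_nonneg _) hF hE
    have hmul := mul_le_mul_of_nonneg_right hpb (hCpos x y)
    have e1 : η x^2 * max (u x - k) 0 * g x y + η y^2 * max (u y - k) 0 * g y x
        = -(((u y - u x) - (f y - f x)) * (η y^2 * max (u y - k) 0 - η x^2 * max (u x - k) 0)) * C x y := by
      simp only [hgd]
      rw [hCsym y x]
      ring
    have e2 : (-((1/4) * max (η x ^2) (η y ^2) * (max (u y - k) 0 - max (u x - k) 0)^2)
        + 2*((max (u x - k) 0)^2 + (max (u y - k) 0)^2) * (Lη*znorm (x - y))^2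
        + Lf^2*znorm (x - y)^2*((if k < u x then 1 else 0) + (if k < u y then 1 else 0))
        + 2*Lf*Lη*znorm (x - y)^2*(max (u x - k) 0 + max (u y - k) 0)) * C x y
        = (-(1/4)) * ((max (u x - k) 0 - max (u y - k) 0)^2 * max (η x ^ 2) (η y ^ 2) * C x y)
          + (ψ x + ψ y) * (znorm (x - y)^2 * C x y) := by
      simp only [hψd]; ring
    rw [e1, ← e2]
    exact hmul
  -- symmetrized double sum
  have swap1 : ∑ x ∈ B, ∑ y ∈ B, η y^2 * max (u y - k) 0 * g y x
      = ∑ x ∈ B, ∑ y ∈ B, η x^2 * max (u x - k) 0 * g x y := Finset.sum_comm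
  have hdouble : (2:ℝ) * ∑ x ∈ B, ∑ y ∈ B, η x^2 * max (u x - k) 0 * g x y
      = ∑ x ∈ B, ∑ y ∈ B,
          (η x^2 * max (u x - k) 0 * g x y + η y^2 * max (u y - k) 0 * g y x) := by
    rw [two_mul]
    nth_rewrite 2 [← swap1]
    rw [← Finset.sum_add_distrib]
    exact Finset.sum_congr rfl fun x _ => (Finset.sum_add_distrib).symm
  have hdsum_le : ∑ x ∈ B, ∑ y ∈ B,
        (η x^2 * max (u x - k) 0 * g x y + η y^2 * max (u y - k) 0 * g y x)
      ≤ ∑ x ∈ B, ∑ y ∈ B,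
        ((-(1/4)) * ((max (u x - k) 0 - max (u y - k) 0)^2 * max (η x ^ 2) (η y ^ 2) * C x y)
          + (ψ x + ψ y) * (znorm (x - y)^2 * C x y)) :=
    Finset.sum_le_sum fun x _ => Finset.sum_le_sum fun y _ => key1 x y
  have hsplit : ∑ x ∈ B, ∑ y ∈ B,
        ((-(1/4)) * ((max (u x - k) 0 - max (u y - k) 0)^2 * max (η x ^ 2) (η y ^ 2) * C x y)
          + (ψ x + ψ y) * (znorm (x - y)^2 * C x y))
      = (-(1/4)) * (∑ x ∈ B, ∑ y ∈ B,
          (max (u x - k) 0 - max (u y - k) 0)^2 * max (η x ^ 2) (η y ^ 2) * C x y)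
        + ∑ x ∈ B, ∑ y ∈ B, (ψ x + ψ y) * (znorm (x - y)^2 * C x y) := by
    simp only [Finset.sum_add_distrib, ← Finset.mul_sum]
  -- ψ double sum bound
  have hinner : ∀ x, ∑ y ∈ B, znorm (x - y)^2 * C x y ≤ muC C x := by
    intro x
    rw [← hmueq x]
    exact Summable.sum_le_tsum B (fun y _ => mul_nonneg (sq_nonneg _) (hCpos x y)) (hmu2 x)
  have hpsi : ∑ x ∈ B, ∑ y ∈ B, (ψ x + ψ y) * (znorm (x - y)^2 * C x y)
      ≤ 2 * ∑ x ∈ B, ψ x * muC C x := by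
    have swap2 : ∑ x ∈ B, ∑ y ∈ B, ψ y * (znorm (x - y)^2 * C x y)
        = ∑ x ∈ B, ∑ y ∈ B, ψ x * (znorm (y - x)^2 * C y x) := Finset.sum_comm
    have step1 : ∑ x ∈ B, ∑ y ∈ B, (ψ x + ψ y) * (znorm (x - y)^2 * C x y)
        = 2 * ∑ x ∈ B, ψ x * (∑ y ∈ B, znorm (x - y)^2 * C x y) := by
      simp only [add_mul, Finset.sum_add_distrib]
      rw [swap2]
      have e3 : ∑ x ∈ B, ∑ y ∈ B, ψ x * (znorm (y - x)^2 * C y x)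
          = ∑ x ∈ B, ∑ y ∈ B, ψ x * (znorm (x - y)^2 * C x y) := by
        refine Finset.sum_congr rfl fun x _ => Finset.sum_congr rfl fun y _ => ?_
        rw [znorm_sub_comm y x, hCsym y x]
      rw [e3]
      rw [two_mul]
      congr 1 <;> exact Finset.sum_congr rfl fun x _ => (Finset.mul_sum _ _ _).symm
    rw [step1]
    have step2 : ∑ x ∈ B, ψ x * (∑ y ∈ B, znorm (x - y)^2 * C x y) ≤ ∑ x ∈ B, ψ x * muC C x :=
      Finset.sum_le_sum fun x _ => mul_le_mul_of_nonneg_left (hinner x) (hψ0 x)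
    linarith
  -- the equation summed against the test function
  have hS2 : ∑ x ∈ B, ∑ y ∈ B, η x^2 * max (u x - k) 0 * g x y
      = -∑ x ∈ B, η x^2 * max (u x - k) 0 * (∑' y, if y ∈ B then 0 else g x y) := by
    have e5 : ∀ x ∈ B, ∑ y ∈ B, η x^2 * max (u x - k) 0 * g x y
        = -(η x^2 * max (u x - k) 0 * (∑' y, if y ∈ B then 0 else g x y)) := by
      intro x hx
      rw [← Finset.mul_sum, hzero x hx]
      ring
    rw [Finset.sum_congr rfl e5, Finset.sum_neg_distrib]
  have htailS : ∑ x ∈ B, η x^2 * max (u x - k) 0 * (∑' y, if y ∈ B then 0 else g x y)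
      ≤ ∑ x ∈ B, η x^2 * max (u x - k) 0 *
          (∑' y, if y ∈ B then 0 else (max (u y - k) 0 + Lf * znorm (x - y)) * C x y) :=
    Finset.sum_le_sum htailbd
  -- nonnegativity of the right-hand side pieces
  have hμ0 : ∀ x : Zd d, 0 ≤ muC C x :=
    fun x => tsum_nonneg (fun z => mul_nonneg (sq_nonneg _) (hCpos _ _))
  have hT2nn : (0:ℝ) ≤ ∑ x ∈ B, (if k < u x then muC C x else 0) :=
    Finset.sum_nonneg fun x _ => by split; exacts [hμ0 x, le_rfl]
  have hT4nn : (0:ℝ) ≤ ∑ x ∈ B, η x^2 * max (u x - k) 0 *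
      (∑' y, if y ∈ B then 0 else (max (u y - k) 0 + Lf * znorm (x - y)) * C x y) := by
    refine Finset.sum_nonneg fun x _ => mul_nonneg (mul_nonneg (sq_nonneg _) (le_max_right _ _)) ?_
    refine tsum_nonneg fun y => ?_
    split
    · exact le_rfl
    · exact mul_nonneg (add_nonneg (le_max_right _ _) (mul_nonneg hLf (znorm_nonneg _))) (hCpos x y)
  -- expand ψ sums
  have hpsiexp : ∑ x ∈ B, ψ x * muC C x
      = 2*Lη^2 * (∑ x ∈ B, (max (u x - k) 0)^2 * muC C x)
        + Lf^2 * (∑ x ∈ B, (if k < u x then muC C x else 0))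
        + 2*Lf*Lη * (∑ x ∈ B, max (u x - k) 0 * muC C x) := by
    have e4 : ∀ x ∈ B, ψ x * muC C x
        = 2*Lη^2 * ((max (u x - k) 0)^2 * muC C x)
          + Lf^2 * (if k < u x then muC C x else 0)
          + 2*Lf*Lη * (max (u x - k) 0 * muC C x) := by
      intro x _
      simp only [hψd]
      split_ifs <;> ring
    rw [Finset.sum_congr rfl e4, Finset.sum_add_distrib, Finset.sum_add_distrib,
      ← Finset.mul_sum, ← Finset.mul_sum, ← Finset.mul_sum]
  -- last term of the goal in our normal form
  have hT4eq : ∑ x ∈ B, max (u x - k) 0 * η x ^ 2 *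
        (∑' y, if y ∈ B then 0 else (max (u y - k) 0 + Lf * znorm (x - y)) * C x y)
      = ∑ x ∈ B, η x^2 * max (u x - k) 0 *
        (∑' y, if y ∈ B then 0 else (max (u y - k) 0 + Lf * znorm (x - y)) * C x y) :=
    Finset.sum_congr rfl fun x _ => by ring
  rw [hT4eq]
  -- final assembly
  linarith [hdouble, hdsum_le, hsplit, hpsi, hS2, htailS, hpsiexp, hT2nn, hT4nn,
    mul_nonneg (mul_nonneg (by norm_num : (0:ℝ) ≤ 8) (mul_nonneg hLf hLf)) hT2nn]



end
end
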